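/- arXiv:math/9308223 — 4 statements merged into one kernel-verified Lean document; each statement's English description precedes it below -/
import Mathlib

section
/- Let C ∈ (0,1) and L > 0 be fixed. Among all pairs (ρ, λ) with ρ, λ ∈ (0,1) satisfying C = (ρ + λ − 1)/(ρλ), the minimum of M = (1/ρ)(1 + L/λ) equals L(√(1−C) + √(1 + 1/L))². -/
/-!
The constraint gives `ρ (1 - Cλ) = 1 - λ`, so `λ (1 - λ) M = (λ + L)(1 - Cλ)` depends on `λ`
alone.
With `s = √(1 - C)` and `t = √(1 + 1/L)` one has the sum-of-squares identity
`(λ + L)(1 - Cλ) = L (s + t)² λ (1 - λ) + L ((1 + s t) λ - 1)²`,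
so `M ≥ L (s + t)²`, with equality at `λ = 1/(1 + s t)`, `ρ = t/(s + t)`.
-/

namespace CrossRatioExtremal

variable {C L s t : ℝ}

lemma objective_mul_eq {ρ lam : ℝ} (hρ : ρ ≠ 0) (hlam : lam ≠ 0)
    (hc : C = (ρ + lam - 1) / (ρ * lam)) :
    1 / ρ * (1 + L / lam) * (lam * (1 - lam)) = (lam + L) * (1 - C * lam) := by
  subst hc
  field_simp
  ring

lemma reduced_objective_eq (hs : s ^ 2 = 1 - C) (ht : L * t ^ 2 = L + 1) (lam : ℝ) :
    (lam + L) * (1 - C * lam) =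
      L * (s + t) ^ 2 * (lam * (1 - lam)) + L * ((1 + s * t) * lam - 1) ^ 2 := by
  linear_combination -(lam * L + lam ^ 2) * hs - (s ^ 2 * lam ^ 2 + lam * (1 - lam)) * ht

lemma le_objective (hL : 0 ≤ L) (hs : s ^ 2 = 1 - C) (ht : L * t ^ 2 = L + 1) {ρ lam : ℝ}
    (hρ : 0 < ρ) (hlam : lam ∈ Set.Ioo (0 : ℝ) 1) (hc : C = (ρ + lam - 1) / (ρ * lam)) :
    L * (s + t) ^ 2 ≤ 1 / ρ * (1 + L / lam) := by
  obtain ⟨hlam0, hlam1⟩ := hlam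
  have hpos : 0 < lam * (1 - lam) := mul_pos hlam0 (by linarith)
  refine le_of_mul_le_mul_right ?_ hpos
  rw [objective_mul_eq hρ.ne' hlam0.ne' hc, reduced_objective_eq hs ht]
  have := mul_nonneg hL (sq_nonneg ((1 + s * t) * lam - 1))
  linarith

lemma optimal_pair_spec (hs0 : 0 < s) (ht0 : 0 < t) (hs : s ^ 2 = 1 - C)
    (ht : L * t ^ 2 = L + 1) :
    t / (s + t) ∈ Set.Ioo (0 : ℝ) 1 ∧ 1 / (1 + s * t) ∈ Set.Ioo (0 : ℝ) 1 ∧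
      C = (t / (s + t) + 1 / (1 + s * t) - 1) / (t / (s + t) * (1 / (1 + s * t))) ∧
      L * (s + t) ^ 2 = 1 / (t / (s + t)) * (1 + L / (1 / (1 + s * t))) := by
  have hst : 0 < s * t := mul_pos hs0 ht0
  refine ⟨⟨by positivity, (div_lt_one (by positivity)).2 (by linarith)⟩,
    ⟨by positivity, (div_lt_one (by positivity)).2 (by linarith)⟩, ?_, ?_⟩
  · field_simp
    linear_combination t * hs
  · field_simp
    linear_combination ht

end CrossRatioExtremal

open CrossRatioExtremal in
/-- The minimum of `M = (1/ρ)(1 + L/λ)` over `ρ, λ ∈ (0,1)` with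
`C = (ρ + λ − 1)/(ρλ)` equals `L(√(1−C) + √(1 + 1/L))²`. -/
theorem stmt_0 (C L : ℝ) (hC : C ∈ Set.Ioo (0:ℝ) 1) (hL : 0 < L) :
    IsLeast { m : ℝ | ∃ ρ lam : ℝ, ρ ∈ Set.Ioo (0:ℝ) 1 ∧ lam ∈ Set.Ioo (0:ℝ) 1 ∧
        C = (ρ + lam - 1) / (ρ * lam) ∧ m = (1 / ρ) * (1 + L / lam) }
      (L * (Real.sqrt (1 - C) + Real.sqrt (1 + 1 / L)) ^ 2) := by
  have hC1 : 0 < 1 - C := by linarith [hC.2]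
  have hL1 : 0 < 1 + 1 / L := by positivity
  have hs : √(1 - C) ^ 2 = 1 - C := Real.sq_sqrt hC1.le
  have ht : L * √(1 + 1 / L) ^ 2 = L + 1 := by
    rw [Real.sq_sqrt hL1.le]
    field_simp
  constructor
  · exact ⟨_, _, optimal_pair_spec (Real.sqrt_pos.2 hC1) (Real.sqrt_pos.2 hL1) hs ht⟩
  · rintro m ⟨ρ, lam, hρ, hlam, hc, rfl⟩
    exact le_objective hL.le hs ht hρ.1 hlam hc
end

section
/- Let C ∈ (0,1) and L > 0. At the constrained minimum of M = (1/ρ)(1 + L/λ) subject to C = (ρ+λ−1)/(ρλ), the optimal λ satisfies λ₀^{-1} = 1 + √((1−C)(1 + L^{-1})). -/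
set_option maxHeartbeats 2000000 in
/-- At the constrained minimum of `M = (1/ρ)(1 + L/λ)` subject to
`C = (ρ+λ−1)/(ρλ)`, the optimal `λ` satisfies `λ⁻¹ = 1 + √((1−C)(1+L⁻¹))`. -/
theorem stmt_1 (C L ρ lam : ℝ) (hC : C ∈ Set.Ioo (0:ℝ) 1) (hL : 0 < L)
    (hρ : ρ ∈ Set.Ioo (0:ℝ) 1) (hlam : lam ∈ Set.Ioo (0:ℝ) 1)
    (hcon : C = (ρ + lam - 1) / (ρ * lam))
    (hmin : ∀ ρ' lam' : ℝ, ρ' ∈ Set.Ioo (0:ℝ) 1 → lam' ∈ Set.Ioo (0:ℝ) 1 →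
      C = (ρ' + lam' - 1) / (ρ' * lam') →
      (1 / ρ) * (1 + L / lam) ≤ (1 / ρ') * (1 + L / lam')) :
    lam⁻¹ = 1 + Real.sqrt ((1 - C) * (1 + L⁻¹)) := by
  obtain ⟨hC0, hC1⟩ := hC
  obtain ⟨hρ0, hρ1⟩ := hρ
  obtain ⟨hl0, hl1⟩ := hlam
  have hLi : 0 < L⁻¹ := inv_pos.mpr hL
  have hprod : (0:ℝ) < (1 - C) * (1 + L⁻¹) := mul_pos (by linarith) (by linarith)
  obtain ⟨s, hsdef⟩ : ∃ s, s = Real.sqrt ((1 - C) * (1 + L⁻¹)) := ⟨_, rfl⟩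
  have hs0 : 0 < s := hsdef ▸ Real.sqrt_pos.mpr hprod
  have hs2 : s ^ 2 = (1 - C) * (1 + L⁻¹) := hsdef ▸ Real.sq_sqrt hprod.le
  have h1s : (0:ℝ) < 1 + s := by linarith
  obtain ⟨l, hldef⟩ : ∃ l : ℝ, l = (1 + s)⁻¹ := ⟨_, rfl⟩
  have hl0' : 0 < l := hldef ▸ inv_pos.mpr h1s
  have hl1' : l < 1 := by
    rw [hldef, inv_lt_one_iff₀]
    right; linarith
  have e1 : l * (1 + s) = 1 := hldef ▸ inv_mul_cancel₀ h1s.ne'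
  have hLne : L ≠ 0 := hL.ne'
  have hLL : L * L⁻¹ = 1 := mul_inv_cancel₀ hLne
  have e2 : L * s ^ 2 = (1 - C) * (L + 1) := by
    have := hs2
    nlinarith [hs2, hLL]
  have hg : (1 - C - C * L) * l ^ 2 + 2 * L * l - L = 0 := by
    linear_combination (L * (l * s - l + 1)) * e1 - l ^ 2 * e2
  -- feasible comparison point
  have hCl : C * l < 1 := by nlinarith [mul_pos (sub_pos.mpr hC1) (sub_pos.mpr hl1'), mul_pos hC0 hl0']
  have hden : 0 < 1 - C * l := by linarith
  obtain ⟨ρ₀, hρ₀def⟩ : ∃ r : ℝ, r = (1 - l) / (1 - C * l) := ⟨_, rfl⟩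
  have hρ₀0 : 0 < ρ₀ := hρ₀def ▸ div_pos (by linarith) hden
  have hρ₀1 : ρ₀ < 1 := by
    rw [hρ₀def, div_lt_one hden]
    nlinarith
  have key0 : ρ₀ * (1 - C * l) = 1 - l := by
    rw [hρ₀def]; exact div_mul_cancel₀ _ hden.ne'
  have hconl : C = (ρ₀ + l - 1) / (ρ₀ * l) := by
    rw [eq_div_iff (by positivity)]
    linear_combination - key0
  have hM := hmin ρ₀ l ⟨hρ₀0, hρ₀1⟩ ⟨hl0', hl1'⟩ hconl
  -- constraint for (ρ, lam)
  have hCρ : C * (ρ * lam) = ρ + lam - 1 := by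
    rw [hcon]
    field_simp
  have hdlam : 0 < 1 - C * lam := by nlinarith [mul_pos hC0 hl0]
  have hρval : ρ = (1 - lam) / (1 - C * lam) := by
    rw [eq_div_iff hdlam.ne']
    linear_combination - hCρ
  -- rewrite both sides of hM
  have lhs_eq : (1 / ρ) * (1 + L / lam) =
      (1 - C * lam) * (lam + L) / (lam * (1 - lam)) := by
    rw [hρval]
    field_simp
  have rhs_eq : (1 / ρ₀) * (1 + L / l) =
      (1 - C * l) * (l + L) / (l * (1 - l)) := by
    rw [hρ₀def]
    field_simp
  rw [lhs_eq, rhs_eq] at hM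
  have hDlam : 0 < lam * (1 - lam) := mul_pos hl0 (by linarith)
  have hDl : 0 < l * (1 - l) := mul_pos hl0' (by linarith)
  have hM' : (1 - C * lam) * (lam + L) * (l * (1 - l)) ≤
      (1 - C * l) * (l + L) * (lam * (1 - lam)) :=
    (div_le_div_iff₀ hDlam hDl).mp hM
  have hident : (1 - C * lam) * (lam + L) * (l * (1 - l)) -
      (1 - C * l) * (l + L) * (lam * (1 - lam)) =
      ((1 - C) * l + L * (1 - C * l)) * (lam - l) ^ 2 := by
    linear_combination (lam - l) * hg
  have ha : 0 < (1 - C) * l + L * (1 - C * l) := add_pos (mul_pos (by linarith) hl0') (mul_pos hL hden)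
  have hsq : ((1 - C) * l + L * (1 - C * l)) * (lam - l) ^ 2 ≤ 0 := by linarith [hident, hM']
  have hsq0 : (lam - l) ^ 2 = 0 := by
    have h1 : (0:ℝ) ≤ ((1 - C) * l + L * (1 - C * l)) * (lam - l) ^ 2 :=
      mul_nonneg ha.le (sq_nonneg _)
    have h2 : ((1 - C) * l + L * (1 - C * l)) * (lam - l) ^ 2 = 0 := le_antisymm hsq h1
    rcases mul_eq_zero.mp h2 with h | h
    · exact absurd h ha.ne'
    · exact h
  have hlame : lam = l := by
    have := pow_eq_zero_iff (n := 2) (by norm_num) |>.mp hsq0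
    linarith [this]
  rw [hlame, hldef, inv_inv, hsdef]
end

section
/- For fixed γ ∈ (0,1), the function t ↦ [t(γ + 1/γ + 2√(1 + γ/t)) + γ²] / [2 − γ² + t(1/γ + γ + 2√(1 + γ/t))] is strictly increasing on (0, ∞). -/
private lemma sqrt_aux (γ : ℝ) (hγ0 : 0 < γ) {t : ℝ} (ht : 0 < t) :
    t * Real.sqrt (1 + γ / t) = Real.sqrt (t ^ 2 + γ * t) := by
  have h : t ^ 2 + γ * t = t ^ 2 * (1 + γ / t) := by field_simp
  rw [h, Real.sqrt_mul (by positivity), Real.sqrt_sq ht.le]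

/-- For fixed `γ ∈ (0,1)`, `T′` is strictly increasing as a function of `t` on `(0,∞)`. -/
theorem stmt_5 (γ : ℝ) (hγ : γ ∈ Set.Ioo (0:ℝ) 1) :
    StrictMonoOn (fun t : ℝ =>
      (t * (γ + 1 / γ + 2 * Real.sqrt (1 + γ / t)) + γ ^ 2)
        / (2 - γ ^ 2 + t * (1 / γ + γ + 2 * Real.sqrt (1 + γ / t))))
      (Set.Ioi (0:ℝ)) := by
  obtain ⟨hγ0, hγ1⟩ := hγ
  intro a ha b hb hab
  simp only [Set.mem_Ioi] at ha hb
  set g : ℝ → ℝ := fun t => t * (γ + 1 / γ) + 2 * Real.sqrt (t ^ 2 + γ * t) with hg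
  have hrw : ∀ t : ℝ, 0 < t →
      t * (γ + 1 / γ + 2 * Real.sqrt (1 + γ / t)) = g t := by
    intro t ht
    have := sqrt_aux γ hγ0 ht
    simp only [hg]
    nlinarith [this]
  have hrw' : ∀ t : ℝ, 0 < t →
      t * (1 / γ + γ + 2 * Real.sqrt (1 + γ / t)) = g t := by
    intro t ht; rw [← hrw t ht]; ring
  have hgpos : ∀ t : ℝ, 0 < t → 0 < g t := by
    intro t ht
    have : 0 < γ + 1 / γ := by positivity
    have : 0 ≤ Real.sqrt (t ^ 2 + γ * t) := Real.sqrt_nonneg _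
    simp only [hg]; nlinarith
  have hgmono : g a < g b := by
    have h1 : a * (γ + 1 / γ) < b * (γ + 1 / γ) := by
      have : 0 < γ + 1 / γ := by positivity
      nlinarith
    have h2 : Real.sqrt (a ^ 2 + γ * a) ≤ Real.sqrt (b ^ 2 + γ * b) := by
      apply Real.sqrt_le_sqrt; nlinarith
    simp only [hg]; nlinarith
  have hA := hgpos a ha
  have hB := hgpos b hb
  have hDa : 0 < 2 - γ ^ 2 + g a := by nlinarith
  have hDb : 0 < 2 - γ ^ 2 + g b := by nlinarith
  simp only [hrw a ha, hrw b hb, hrw' a ha, hrw' b hb]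
  rw [div_lt_div_iff₀ hDa hDb]
  nlinarith [mul_pos (sub_pos.2 hgmono) (show (0:ℝ) < 2 - 2 * γ ^ 2 by nlinarith)]
end

section
/- Let β > 0, α = β/2, λ₁(B), λ₂(B) ∈ ℝ with λ₁(B) ≤ α, λ₂(B) ≤ α and λ₁(B) + λ₂(B) ≥ 0, and let k ≥ 1 be an integer. Define s̄₁ = (β − λ₁(B) + γ)/2 + (λ₁(B)+λ₂(B))/2^{k+1}, s̄₂ = (β − λ₁(B) + γ)/2, s̄₃ = (α − λ₂(B))/2^k + s̄₁, s̄₄ = s̄₃ + (λ₁(B)+λ₂(B))/2^{k+1}, where γ = (α + λ₁(B))(1 − 2^{-k}). Then with λ̄₁ = α/2 − (α − λ₂(B))/2^{k+1} and λ̄₂ = −α/2 + (α + λ₁(B))/2^{k+1}, one has: s̄₁ ≥ α + λ̄₁, s̄₂ ≥ α − λ̄₂, s̄₃ ≥ β − λ̄₁, s̄₄ ≥ β + λ̄₂, λ̄₁ ≤ α, λ̄₂ ≤ α, and λ̄₁ + λ̄₂ ≥ 0. -/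
/-- The separation bounds constructed for immediate preimages in a close return of
depth `k` form a normalized separation symbol of norm `β` with the stated
corrections (here `α = β/2`). -/
theorem stmt_16 (β l₁ l₂ : ℝ) (k : ℕ) (hβ : 0 < β) (hk : 1 ≤ k)
    (hl1 : l₁ ≤ β / 2) (hl2 : l₂ ≤ β / 2) (hsum : 0 ≤ l₁ + l₂)
    (γ s₁ s₂ s₃ s₄ m₁ m₂ : ℝ)
    (hγ : γ = (β / 2 + l₁) * (1 - 1 / 2 ^ k))
    (hs2 : s₂ = (β - l₁ + γ) / 2)
    (hs1 : s₁ = (β - l₁ + γ) / 2 + (l₁ + l₂) / 2 ^ (k + 1))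
    (hs3 : s₃ = (β / 2 - l₂) / 2 ^ k + s₁)
    (hs4 : s₄ = s₃ + (l₁ + l₂) / 2 ^ (k + 1))
    (hm1 : m₁ = β / 4 - (β / 2 - l₂) / 2 ^ (k + 1))
    (hm2 : m₂ = -(β / 4) + (β / 2 + l₁) / 2 ^ (k + 1)) :
    s₁ ≥ β / 2 + m₁ ∧ s₂ ≥ β / 2 - m₂ ∧ s₃ ≥ β - m₁ ∧ s₄ ≥ β + m₂ ∧
    m₁ ≤ β / 2 ∧ m₂ ≤ β / 2 ∧ 0 ≤ m₁ + m₂ := by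
  have hp : (0:ℝ) < 2 ^ k := by positivity
  have hp2 : (2:ℝ) ≤ 2 ^ k := by
    calc (2:ℝ) = 2 ^ 1 := (pow_one 2).symm
    _ ≤ 2 ^ k := pow_le_pow_right₀ (by norm_num) hk
  have hpk : (2:ℝ) ^ (k + 1) = 2 * 2 ^ k := by ring
  have ht : (1:ℝ) / 2 ^ k ≤ 1 / 2 := by
    apply div_le_div_of_nonneg_left (by norm_num) (by norm_num) hp2
  have ht0 : (0:ℝ) < 1 / 2 ^ k := by positivity
  subst hγ hs2 hs1 hs3 hs4 hm1 hm2
  rw [hpk]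
  set t : ℝ := 1 / 2 ^ k with htdef
  have hexp : ∀ x : ℝ, x / 2 ^ k = x * t := fun x => by rw [htdef]; ring
  have hexp2 : ∀ x : ℝ, x / (2 * 2 ^ k) = x * t / 2 := fun x => by
    rw [htdef]; field_simp
  refine ⟨?_, ?_, ?_, ?_, ?_, ?_, ?_⟩ <;>
    simp only [hexp, hexp2] <;> nlinarith [mul_nonneg hsum ht0.le, mul_le_of_le_one_right hsum (by linarith : t ≤ 1), mul_nonneg (by linarith : (0:ℝ) ≤ β/2 - l₂) ht0.le, mul_nonneg (by linarith : (0:ℝ) ≤ β/2 + l₁) ht0.le, mul_nonneg hβ.le ht0.le]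
end
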